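/- arXiv:math/0312270 — 6 statements merged into one kernel-verified Lean document; each statement's English description precedes it below -/
import Mathlib

section
/- Fix s ≠ t with s, t > 0 and set u = √(st). Define a_n = (u + n − 1) / √((s+n−1)(t+n−1)) for n ≥ 1. Then a_n = 1 + (u − (s+t)/2)/(n−1) + O(1/(n−1)^2) as n → ∞, and since u − (s+t)/2 = √(st) − (s+t)/2 < 0, the infinite product ∏_{n≥2} a_n diverges to 0. -/
/-!
Write `m = n - 1`, `u = √(st)` and `D = √((s + m)(t + m))`. Then `(u + m)² - D² = (2u - s - t) m`,
so `a_n - 1 = (2u - s - t) m / (D (D + u + m))`, and `m ≤ D ≤ m + (s + t)/2` makes the denominator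
`2m² + O(m)`; this gives the expansion. By AM–GM `c = u - (s + t)/2 < 0`, and
`a_n ≤ exp (c/m + C/m²)` bounds the partial products by `exp (c H_N + C ∑ 1/m²) → 0`, since the
harmonic series diverges while `∑ 1/m²` converges.
-/

open Filter Finset Topology

theorem Real.sqrt_mul_le_add_div_two {s t : ℝ} (hs : 0 ≤ s) (ht : 0 ≤ t) :
    √(s * t) ≤ (s + t) / 2 :=
  (Real.sqrt_le_left (by positivity)).2 (by nlinarith [sq_nonneg (s - t)])

theorem Real.sqrt_mul_lt_add_div_two {s t : ℝ} (hs : 0 ≤ s) (ht : 0 ≤ t) (hst : s ≠ t) :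
    √(s * t) < (s + t) / 2 := by
  have hpos : 0 < (s + t) / 2 := by
    contrapose! hst
    linarith
  exact (Real.sqrt_lt' hpos).2 (by nlinarith [sq_pos_of_ne_zero (sub_ne_zero.2 hst)])

/-- `ewensAffinity s t (n - 1)` is the Hellinger affinity `a_n` of the `n`-th factors of the
Ewens measures `μ_s` and `μ_t`. -/
noncomputable def ewensAffinity (s t m : ℝ) : ℝ :=
  (√(s * t) + m) / √((s + m) * (t + m))

theorem abs_ewensAffinity_sub_le {s t m : ℝ} (hs : 0 ≤ s) (ht : 0 ≤ t) (hm : 1 ≤ m) :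
    |ewensAffinity s t m - (1 + (√(s * t) - (s + t) / 2) / m)|
      ≤ |√(s * t) - (s + t) / 2| * ((s + t) / 2 * ((s + t) / 2 + 2)) / m ^ 2 := by
  set u := √(s * t)
  set p := (s + t) / 2 with hp
  set D := √((s + m) * (t + m))
  have hu : u ^ 2 = s * t := Real.sq_sqrt (by positivity)
  have hD : D ^ 2 = (s + m) * (t + m) := Real.sq_sqrt (by positivity)
  have hup : u ≤ p := Real.sqrt_mul_le_add_div_two hs ht
  have hmD : m ≤ D := (Real.le_sqrt' (by positivity)).2 (by nlinarith)
  have hDp : D ≤ m + p :=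
    (Real.sqrt_le_left (by positivity)).2 (by rw [hp]; nlinarith [sq_nonneg (s - t)])
  have hu0 : 0 ≤ u := Real.sqrt_nonneg _
  have hm0 : 0 < m := by linarith
  have hp0 : 0 ≤ p := by positivity
  have hdiff : ewensAffinity s t m - (1 + (u - p) / m)
      = (u - p) * (2 * m ^ 2 - D * (D + u + m)) / (m * (D * (D + u + m))) := by
    have : 0 < D := by linarith
    change (u + m) / D - _ = _
    rw [eq_div_iff (by positivity)]
    field_simp
    rw [hp]
    linear_combination m * hu - m * hD
  have hnum : |2 * m ^ 2 - D * (D + u + m)| ≤ 2 * p * (p + 2) * m := by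
    rw [abs_le]
    constructor
    · nlinarith [mul_le_mul hDp (show D + u + m ≤ 2 * (m + p) by linarith) (by positivity)
        (by positivity), mul_le_mul_of_nonneg_left hm (by positivity : 0 ≤ p ^ 2)]
    · nlinarith [mul_le_mul hmD (show 2 * m ≤ D + u + m by linarith) (by positivity)
        (by positivity), mul_nonneg hp0 hm0.le]
  have hden : 2 * m ^ 3 ≤ m * (D * (D + u + m)) := by
    nlinarith [mul_le_mul hmD (show 2 * m ≤ D + u + m by linarith) (by positivity)
        (by positivity)]
  rw [hdiff, abs_div, abs_mul, abs_of_pos (by positivity : 0 < m * (D * (D + u + m)))]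
  calc |u - p| * |2 * m ^ 2 - D * (D + u + m)| / (m * (D * (D + u + m)))
      ≤ |u - p| * (2 * p * (p + 2) * m) / (2 * m ^ 3) :=
        div_le_div₀ (by positivity) (mul_le_mul_of_nonneg_left hnum (abs_nonneg _))
          (by positivity) hden
    _ = |u - p| * (p * (p + 2)) / m ^ 2 := by
        field_simp

theorem tendsto_prod_range_zero_of_le_one_add_div {a : ℕ → ℝ} {c C : ℝ} (hc : c < 0)
    (ha₀ : ∀ i, 0 ≤ a i) (ha : ∀ i : ℕ, a i ≤ 1 + c / (i + 1) + C / (i + 1) ^ 2) :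
    Tendsto (fun N => ∏ i ∈ range N, a i) atTop (𝓝 0) := by
  have hsq : Summable fun i : ℕ => 1 / ((i : ℝ) + 1) ^ 2 := by
    exact_mod_cast (summable_nat_add_iff 1).2 (Real.summable_one_div_nat_pow.2 one_lt_two)
  have hlog : Tendsto (fun N => ∑ i ∈ range N, (c / (i + 1) + C / (i + 1) ^ 2)) atTop atBot := by
    have hsplit : ∀ N, ∑ i ∈ range N, (c / (i + 1) + C / (i + 1) ^ 2)
        = c * ∑ i ∈ range N, 1 / ((i : ℝ) + 1) + C * ∑ i ∈ range N, 1 / ((i : ℝ) + 1) ^ 2 := by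
      intro N
      simp only [mul_sum, ← sum_add_distrib, mul_one_div]
    simp only [hsplit]
    exact ((tendsto_const_mul_atBot_of_neg hc).2
      Real.tendsto_sum_range_one_div_nat_succ_atTop).atBot_add
      (hsq.hasSum.tendsto_sum_nat.const_mul C)
  refine squeeze_zero (fun N => prod_nonneg fun i _ => ha₀ i) (fun N => ?_)
    (Real.tendsto_exp_atBot.comp hlog)
  calc ∏ i ∈ range N, a i ≤ ∏ i ∈ range N, Real.exp (c / (i + 1) + C / (i + 1) ^ 2) :=
        prod_le_prod (fun i _ => ha₀ i) fun i _ =>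
          (ha i).trans (by linarith [Real.add_one_le_exp (c / (i + 1) + C / (i + 1) ^ 2)])
    _ = Real.exp (∑ i ∈ range N, (c / (i + 1) + C / (i + 1) ^ 2)) := (Real.exp_sum _ _).symm

theorem Finset.prod_Icc_two_eq_prod_range {M : Type*} [CommMonoid M] (f : ℕ → M) (N : ℕ) :
    ∏ n ∈ Icc 2 N, f n = ∏ i ∈ range (N - 1), f (i + 2) := by
  rw [← Ico_add_one_right_eq_Icc, prod_Ico_eq_prod_range, show N + 1 - 2 = N - 1 by omega]
  simp only [add_comm]

theorem ewensAffinity_natCast_sub_one (s t : ℝ) (n : ℕ) :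
    (√(s * t) + n - 1) / √((s + n - 1) * (t + n - 1)) = ewensAffinity s t (n - 1) := by
  simp only [ewensAffinity, add_sub_assoc]

/-- Kakutani-criterion computation: with `u = √(st)` and
`a_n = (u + n − 1)/√((s+n−1)(t+n−1))`, one has
`a_n = 1 + (u − (s+t)/2)/(n−1) + O(1/(n−1)²)`, the constant `u − (s+t)/2` is negative,
and the infinite product `∏_{n≥2} a_n` diverges to `0`. -/
theorem stmt4 (s t : ℝ) (hs : 0 < s) (ht : 0 < t) (hst : s ≠ t) :
    (∃ C : ℝ, ∀ n : ℕ, 2 ≤ n →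
      |(Real.sqrt (s * t) + n - 1) / Real.sqrt ((s + n - 1) * (t + n - 1))
          - (1 + (Real.sqrt (s * t) - (s + t) / 2) / ((n : ℝ) - 1))|
        ≤ C / ((n : ℝ) - 1) ^ 2) ∧
    Real.sqrt (s * t) - (s + t) / 2 < 0 ∧
    Tendsto
      (fun N : ℕ => ∏ n ∈ Finset.Icc 2 N,
        (Real.sqrt (s * t) + n - 1) / Real.sqrt ((s + n - 1) * (t + n - 1)))
      atTop (nhds 0) := by
  set c := √(s * t) - (s + t) / 2
  set C := |c| * ((s + t) / 2 * ((s + t) / 2 + 2))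
  have hc : c < 0 := sub_neg.2 (Real.sqrt_mul_lt_add_div_two hs.le ht.le hst)
  have hest (m : ℝ) (hm : 1 ≤ m) : |ewensAffinity s t m - (1 + c / m)| ≤ C / m ^ 2 :=
    abs_ewensAffinity_sub_le hs.le ht.le hm
  refine ⟨⟨C, fun n hn => ?_⟩, hc, ?_⟩
  · rw [ewensAffinity_natCast_sub_one]
    exact hest _ (le_sub_iff_add_le.2 (by exact_mod_cast hn))
  have hprod (N : ℕ) : ∏ n ∈ Icc 2 N, (√(s * t) + n - 1) / √((s + n - 1) * (t + n - 1))
      = ∏ i ∈ range (N - 1), ewensAffinity s t (i + 1) := by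
    rw [prod_Icc_two_eq_prod_range]
    refine prod_congr rfl fun i _ => ?_
    rw [ewensAffinity_natCast_sub_one]
    push_cast
    congr 1
    ring
  simp only [hprod]
  refine (tendsto_prod_range_zero_of_le_one_add_div (C := C) hc (fun i => ?_) (fun i => ?_)).comp
    (tendsto_sub_atTop_nat 1)
  · unfold ewensAffinity
    positivity
  · linarith [(abs_le.1 (hest (i + 1) (by simp))).2]
end

section
/- For each t > 0 and n ≥ 2, the Ewens measure μ_t^n on S(n) is the pushforward of the product measure μ̄_t^1 × ⋯ × μ̄_t^n on {0}×{0,1}×⋯×{0,…,n−1} under the coding bijection, because the number of cycles [x] of a permutation x equals the number of zero coordinates in its code (i_1,…,i_n). -/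
/-- The number of cycles of a permutation, counting fixed points as cycles. -/
def cycleCount {n : ℕ} (x : Equiv.Perm (Fin n)) : ℕ :=
  x.cycleType.card + (Finset.univ.filter fun i => x i = i).card

/-- The canonical projection `S(n+1) → S(n)`: remove the largest element from its cycle. -/
def proj {n : ℕ} (x : Equiv.Perm (Fin (n + 1))) : Equiv.Perm (Fin n) :=
  Equiv.removeNone (finSuccEquivLast.permCongr x)

/-- The code `(i_1,…,i_n)` of a permutation in `S(n)` (as a list, `i_k` at position `k-1`):
`i_k = 0` if the element `k` starts a new cycle in the partial permutation `p_k(x)`,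
and `i_k = j ∈ {1,…,k−1}` if `k` was inserted into a cycle right before `j`. -/
def code : (n : ℕ) → Equiv.Perm (Fin n) → List ℕ
  | 0, _ => []
  | n + 1, x =>
      code n (proj x) ++
        [if x (Fin.last n) = Fin.last n then 0 else (x (Fin.last n) : ℕ) + 1]

/-! Count the cycles of `σ`, fixed points included, as the parts of `σ.partition`. Up to the
relabelling `Fin (n + 1) ≃ Option (Fin n)` sending the largest element `m` to `none`, the
projection satisfies `optionCongr (proj σ) = swap m (σ m) * σ` (`map_equiv_removeNone`).
Extending by a fixed point adds one cycle, and when `σ m ≠ m` the transposition splits `m` off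
its cycle, adding one more. So `[σ] = [proj σ] + 1` exactly when `m` is a fixed point, i.e. when
the last code entry is `0`; the Ewens weight then factors over the code entries. -/

open Equiv Finset

namespace Equiv.Perm

variable {α : Type*} [Fintype α] [DecidableEq α]

theorem card_parts_partition (σ : Perm α) :
    Multiset.card σ.partition.parts
      = Multiset.card σ.cycleType + (Fintype.card α - #σ.support) := by
  simp [parts_partition]

theorem Disjoint.card_parts_partition_mul {σ τ : Perm α} (h : Disjoint σ τ) :
    Multiset.card (σ * τ).partition.parts + Fintype.card α
      = Multiset.card σ.partition.parts + Multiset.card τ.partition.parts := by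
  have hsupp : #σ.support + #τ.support ≤ Fintype.card α :=
    h.card_support_mul ▸ card_le_univ _
  simp only [card_parts_partition, h.cycleType_mul, h.card_support_mul, Multiset.card_add]
  omega

theorem IsCycle.card_parts_partition {c : Perm α} (hc : c.IsCycle) :
    Multiset.card c.partition.parts = Fintype.card α - #c.support + 1 := by
  rw [Perm.card_parts_partition, hc.cycleType, Multiset.card_singleton, add_comm]

theorem IsCycle.card_parts_partition_swap_mul {c : Perm α} (hc : c.IsCycle) {a : α}
    (ha : c a ≠ a) :
    Multiset.card (swap a (c a) * c).partition.parts = Multiset.card c.partition.parts + 1 := by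
  have hle : #c.support ≤ Fintype.card α := card_le_univ _
  have htwo : 2 ≤ #c.support := hc.two_le_card_support
  rw [hc.card_parts_partition]
  by_cases hca : c (c a) = a
  · have hswap : c = swap a (c a) := hc.eq_swap_of_apply_apply_eq_self ha hca
    have hsupp : #c.support = 2 := hswap ▸ card_support_swap (Ne.symm ha)
    have hone : swap a (c a) * c = 1 := by
      nth_rewrite 2 [hswap]
      exact swap_mul_self _ _
    rw [hone, Perm.card_parts_partition]
    simp only [cycleType_one, Multiset.card_zero, support_one, card_empty]
    omega
  · have hsupp : #(swap a (c a) * c).support = #c.support - 1 := by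
      rw [support_swap_mul_eq c a hca, card_sdiff_of_subset (by simpa using ha), card_singleton]
    rw [(hc.swap_mul ha hca).card_parts_partition, hsupp]
    omega

theorem card_parts_partition_swap_mul (g : Perm α) {a : α} (ha : g a ≠ a) :
    Multiset.card (swap a (g a) * g).partition.parts = Multiset.card g.partition.parts + 1 := by
  set c := g.cycleOf a
  set h := g * c⁻¹
  have hc : c.IsCycle := isCycle_cycleOf g ha
  have hca : c a = g a := cycleOf_apply_self g a
  have hdisj : Disjoint h c := disjoint_mul_inv_of_mem_cycleFactorsFinset
    (cycleOf_mem_cycleFactorsFinset_iff.2 (mem_support.2 ha))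
  have hg : g = c * h := by rw [← hdisj.commute.eq, inv_mul_cancel_right]
  have hdisj' : Disjoint (swap a (c a) * c) h :=
    hdisj.symm.mono (fun y hy => (mem_support_swap_mul_imp_mem_support_ne hy).1) le_rfl
  have hsplit := hdisj.symm.card_parts_partition_mul
  calc Multiset.card (swap a (g a) * g).partition.parts
      = Multiset.card (swap a (c a) * c * h).partition.parts := by
        rw [hca, mul_assoc, ← hg]
    _ = Multiset.card (swap a (c a) * c).partition.parts + Multiset.card h.partition.parts
          - Fintype.card α := by
        rw [← hdisj'.card_parts_partition_mul, Nat.add_sub_cancel]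
    _ = Multiset.card g.partition.parts + 1 := by
        rw [hc.card_parts_partition_swap_mul (hca ▸ ha), hg]
        omega

theorem card_parts_partition_extendDomain {β : Type*} [Fintype β] [DecidableEq β]
    {p : β → Prop} [DecidablePred p] (σ : Perm α) (f : α ≃ Subtype p) :
    Multiset.card (σ.extendDomain f).partition.parts
      = Multiset.card σ.partition.parts + (Fintype.card β - Fintype.card α) := by
  have hαβ : Fintype.card α ≤ Fintype.card β :=
    (Fintype.card_congr f).trans_le (Fintype.card_subtype_le p)
  have hle : #σ.support ≤ Fintype.card α := card_le_univ _
  rw [Perm.card_parts_partition, Perm.card_parts_partition, cycleType_extendDomain,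
    card_support_extend_domain]
  omega

theorem card_parts_partition_permCongr {β : Type*} [Fintype β] [DecidableEq β] (e : α ≃ β)
    (σ : Perm α) :
    Multiset.card (e.permCongr σ).partition.parts = Multiset.card σ.partition.parts := by
  have hext :
      e.permCongr σ = σ.extendDomain (e.trans (subtypeUnivEquiv fun _ => trivial).symm) := by
    ext b
    rw [extendDomain_apply_subtype _ _ trivial]
    simp [subtypeUnivEquiv]
  have := Fintype.card_congr e
  rw [hext, card_parts_partition_extendDomain]
  omega

theorem card_parts_partition_optionCongr (σ : Perm α) :
    Multiset.card (partition (optionCongr σ)).parts = Multiset.card σ.partition.parts + 1 := by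
  have hext : σ.optionCongr = σ.extendDomain (optionIsSomeEquiv α).symm := by
    refine Equiv.ext fun o => ?_
    cases o with
    | none =>
      rw [extendDomain_apply_not_subtype _ _ (by simp)]
      simp
    | some a =>
      rw [extendDomain_apply_subtype σ (optionIsSomeEquiv α).symm (b := some a) rfl]
      rfl
  rw [hext, card_parts_partition_extendDomain, Fintype.card_option, Nat.add_sub_cancel_left]

end Equiv.Perm

open Equiv.Perm

theorem cycleCount_eq_card_parts_partition {n : ℕ} (x : Perm (Fin n)) :
    cycleCount x = Multiset.card x.partition.parts := by
  have hfix : #(univ.filter fun i => x i = i) = #x.supportᶜ := by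
    congr 1; ext i; simp [mem_support]
  rw [cycleCount, card_parts_partition, hfix, card_compl]

theorem cycleCount_eq_cycleCount_proj {n : ℕ} (x : Perm (Fin (n + 1))) :
    cycleCount x = cycleCount (proj x) + if x (Fin.last n) = Fin.last n then 1 else 0 := by
  set σ := finSuccEquivLast.permCongr x
  have hx : cycleCount x = Multiset.card σ.partition.parts := by
    rw [cycleCount_eq_card_parts_partition, card_parts_partition_permCongr]
  have hproj : cycleCount (proj x) + 1
      = Multiset.card (partition (optionCongr (removeNone σ))).parts := by
    rw [cycleCount_eq_card_parts_partition, card_parts_partition_optionCongr, proj]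
  have hσ : σ none = none ↔ x (Fin.last n) = Fin.last n := by
    simp only [σ, permCongr_apply, finSuccEquivLast_symm_none]
    rw [← finSuccEquivLast_last, Equiv.apply_eq_iff_eq]
  rw [map_equiv_removeNone] at hproj
  split_ifs with hlast
  · rw [hσ.2 hlast, swap_self, ← Perm.one_def, one_mul] at hproj
    omega
  · rw [card_parts_partition_swap_mul σ (mt hσ.1 hlast)] at hproj
    omega

theorem cycleCount_eq_count_zero_code (n : ℕ) (x : Perm (Fin n)) :
    cycleCount x = (code n x).count 0 := by
  induction n with
  | zero => simp [code, cycleCount, Subsingleton.elim x 1]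
  | succ n ih =>
    rw [code, List.count_append, cycleCount_eq_cycleCount_proj, ih]
    split_ifs <;> simp_all

theorem length_code (n : ℕ) (x : Perm (Fin n)) : (code n x).length = n := by
  induction n with
  | zero => rfl
  | succ n ih => simp [code, ih]

theorem List.prod_range_length_ite_getD_eq_zero {M : Type*} [CommMonoid M] (l : List ℕ)
    (a : M) :
    ∏ k ∈ Finset.range l.length, (if l.getD k 0 = 0 then a else 1) = a ^ l.count 0 := by
  induction l with
  | nil => simp
  | cons b l ih =>
    rw [length_cons, Finset.prod_range_succ', count_cons]
    simp only [getD_cons_succ, getD_cons_zero, ih]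
    split_ifs <;> simp_all [pow_succ]

theorem stmt6_general (n : ℕ) (t : ℝ) (x : Equiv.Perm (Fin n)) :
    cycleCount x = (code n x).count 0 ∧
    t ^ cycleCount x / ∏ i ∈ Finset.range n, (t + i)
      = ∏ k ∈ Finset.range n,
          (if (code n x).getD k 0 = 0 then t / (t + k) else 1 / (t + k)) := by
  have hcount := cycleCount_eq_count_zero_code n x
  refine ⟨hcount, ?_⟩
  calc t ^ cycleCount x / ∏ i ∈ range n, (t + i)
      = (∏ k ∈ range n, if (code n x).getD k 0 = 0 then t else 1)
          / ∏ k ∈ range n, (t + k) := by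
        have h := List.prod_range_length_ite_getD_eq_zero (code n x) t
        rw [length_code] at h
        rw [h, hcount]
    _ = ∏ k ∈ range n, (if (code n x).getD k 0 = 0 then t / (t + k) else 1 / (t + k)) := by
        rw [← prod_div_distrib]
        exact prod_congr rfl fun k _ => by split_ifs <;> rfl

/-- The number of cycles `[x]` equals the number of zero coordinates in the code of `x`;
consequently the Ewens weight `t^{[x]}/(t(t+1)⋯(t+n−1))` of `x` equals the product of the
weights `μ̄_t^k(i_k)` of its code entries, i.e. the Ewens measure `μ_t^n` is the pushforward
of the product measure `μ̄_t^1 × ⋯ × μ̄_t^n` under the coding bijection. -/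
theorem stmt6 (n : ℕ) (hn : 2 ≤ n) (t : ℝ) (ht : 0 < t) (x : Equiv.Perm (Fin n)) :
    cycleCount x = (code n x).count 0 ∧
    t ^ cycleCount x / ∏ i ∈ Finset.range n, (t + i)
      = ∏ k ∈ Finset.range n,
          (if (code n x).getD k 0 = 0 then t / (t + k) else 1 / (t + k)) :=
  stmt6_general n t x
end

section
/- The canonical projection p: S(n+1) → S(n), which removes the element n+1 from its cycle, is equivariant for the two-sided action of S(n): p(g₂⁻¹ x g₁) = g₂⁻¹ p(x) g₁ for all g₁, g₂ ∈ S(n) and x ∈ S(n+1). Moreover, for n ≥ 4 it is the unique map S(n+1) → S(n) with this equivariance property. -/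
/-- The embedding `S(n) ⊂ S(n+1)` as the permutations fixing the last element. -/
def emb {n : ℕ} (g : Equiv.Perm (Fin n)) : Equiv.Perm (Fin (n + 1)) :=
  finSuccEquivLast.symm.permCongr g.optionCongr

open Equiv

theorem Equiv.Perm.centralizer_stabilizer_eq_bot {α : Type*} [Fintype α] [DecidableEq α]
    (hα : 4 ≤ Fintype.card α) (z : α) :
    Subgroup.centralizer (MulAction.stabilizer (Perm α) z : Set (Perm α)) = ⊥ := by
  refine (Subgroup.eq_bot_iff_forall _).mpr fun σ hσ => ?_
  rw [Subgroup.mem_centralizer_iff] at hσ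
  have fix_of_ne : ∀ i, i ≠ z → σ i = i := by
    intro i hiz
    by_contra hi
    obtain ⟨k, -, hk⟩ := Finset.exists_mem_notMem_of_card_lt_card
      (s := {z, i, σ i}) (t := Finset.univ) ((Finset.card_le_three).trans_lt (by simpa))
    simp only [Finset.mem_insert, Finset.mem_singleton, not_or] at hk
    obtain ⟨hkz, hki, hkσ⟩ := hk
    -- `swap i k` fixes `z`, and commuting with it would force `σ k = σ i`.
    have hswap := congrArg (· i)
      (hσ (swap i k) (swap_apply_of_ne_of_ne (Ne.symm hiz) (Ne.symm hkz)))
    simp only [Perm.mul_apply, swap_apply_left, swap_apply_of_ne_of_ne hi (Ne.symm hkσ)] at hswap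
    exact hki (σ.injective hswap).symm
  ext i
  rw [Perm.one_apply]
  by_cases hiz : i = z
  · subst hiz
    by_contra hi
    exact hi (σ.injective (fix_of_ne _ hi))
  · exact fix_of_ne i hiz

theorem Equiv.removeNone_optionCongr_mul_mul {α : Type*} (a b : Perm α) (σ : Perm (Option α)) :
    removeNone (a.optionCongr * σ * b.optionCongr) = a * removeNone σ * b := by
  classical
  apply optionCongr_injective
  have hmul : ∀ c d : Perm α, (c * d).optionCongr = c.optionCongr * d.optionCongr :=
    fun c d => optionCongr_trans d c
  have hnone : (a.optionCongr * σ * b.optionCongr) none = a.optionCongr (σ none) := rfl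
  -- `map_equiv_removeNone`: `(removeNone σ).optionCongr = swap none (σ none) * σ`
  rw [map_equiv_removeNone, hmul, hmul, map_equiv_removeNone, hnone, show swap none (a.optionCongr (σ none)) = swap (a.optionCongr none) (a.optionCongr (σ none))
    from rfl]
  simp only [← mul_assoc]
  rw [← mul_swap_eq_swap_mul]

section Fin

variable {n : ℕ}

theorem permCongr_emb (g : Perm (Fin n)) :
    finSuccEquivLast.permCongr (emb g) = g.optionCongr := by
  rw [emb, ← permCongr_symm, apply_symm_apply]

theorem emb_inv (g : Perm (Fin n)) : emb g⁻¹ = (emb g)⁻¹ := by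
  apply finSuccEquivLast.permCongr.injective
  change _ = finSuccEquivLast.permCongrHom (emb g)⁻¹
  rw [map_inv]
  change _ = (finSuccEquivLast.permCongr (emb g))⁻¹
  rw [permCongr_emb, permCongr_emb]
  rfl

@[simp]
theorem emb_one : emb (1 : Perm (Fin n)) = 1 := by
  simp [emb, Perm.one_def]

@[simp]
theorem emb_last (g : Perm (Fin n)) : emb g (Fin.last n) = Fin.last n := by
  simp [emb]

@[simp]
theorem emb_castSucc (g : Perm (Fin n)) (i : Fin n) : emb g i.castSucc = (g i).castSucc := by
  simp [emb]

theorem proj_emb_mul_mul_emb (a b : Perm (Fin n)) (x : Perm (Fin (n + 1))) :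
    proj (emb a * x * emb b) = a * proj x * b := by
  rw [proj, permCongr_mul, permCongr_mul, permCongr_emb, permCongr_emb,
    removeNone_optionCongr_mul_mul, proj]

theorem emb_proj (x : Perm (Fin (n + 1))) :
    emb (proj x) = swap (Fin.last n) (x (Fin.last n)) * x := by
  apply finSuccEquivLast.permCongr.injective
  rw [permCongr_emb, proj, map_equiv_removeNone, permCongr_mul]
  congr 1
  conv_rhs => rw [permCongr_def, symm_trans_swap_trans]
  simp

theorem commute_emb_swap_last_castSucc {g : Perm (Fin n)} {a : Fin n} (ha : g a = a) :
    Commute (emb g) (swap (Fin.last n) a.castSucc) := by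
  rw [Commute, SemiconjBy, mul_swap_eq_swap_mul, emb_last, emb_castSucc, ha]

def IsBiequivariant (q : Perm (Fin (n + 1)) → Perm (Fin n)) : Prop :=
  ∀ (g₁ g₂ : Perm (Fin n)) (x : Perm (Fin (n + 1))), q (emb g₂⁻¹ * x * emb g₁) = g₂⁻¹ * q x * g₁

theorem proj_isBiequivariant : IsBiequivariant (n := n) proj :=
  fun g₁ g₂ x => proj_emb_mul_mul_emb g₂⁻¹ g₁ x

namespace IsBiequivariant

variable {q : Perm (Fin (n + 1)) → Perm (Fin n)}

theorem map_mul_emb (hq : IsBiequivariant q) (x : Perm (Fin (n + 1))) (g : Perm (Fin n)) :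
    q (x * emb g) = q x * g := by
  simpa using hq g 1 x

theorem commute_of_commute_emb (hq : IsBiequivariant q) {g : Perm (Fin n)}
    {x : Perm (Fin (n + 1))} (h : Commute (emb g) x) : Commute g (q x) := by
  have hx := hq g g x
  rw [emb_inv, mul_assoc, ← h.eq, inv_mul_cancel_left] at hx
  calc g * q x = g * (g⁻¹ * q x * g) := by rw [← hx]
    _ = q x * g := by group

theorem map_swap_last (hq : IsBiequivariant q) (hn : 4 ≤ n) (y : Fin (n + 1)) :
    q (swap (Fin.last n) y) = 1 := by
  obtain ⟨z, hz⟩ : ∃ z : Fin n, y = Fin.last n ∨ y = z.castSucc := by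
    induction y using Fin.lastCases with
    | last => exact ⟨⟨0, by omega⟩, Or.inl rfl⟩
    | cast z => exact ⟨z, Or.inr rfl⟩
  have hcomm : ∀ g : Perm (Fin n), g z = z → Commute (emb g) (swap (Fin.last n) y) := by
    intro g hg
    rcases hz with rfl | rfl
    · rw [swap_self]
      exact Commute.one_right _
    · exact commute_emb_swap_last_castSucc hg
  have hmem : q (swap (Fin.last n) y) ∈
      Subgroup.centralizer (MulAction.stabilizer (Perm (Fin n)) z : Set (Perm (Fin n))) :=
    Subgroup.mem_centralizer_iff.mpr fun g hg => (hq.commute_of_commute_emb (hcomm g hg)).eq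
  rwa [Perm.centralizer_stabilizer_eq_bot (by simpa using hn), Subgroup.mem_bot] at hmem

theorem eq_proj (hq : IsBiequivariant q) (hn : 4 ≤ n) : q = proj := by
  funext x
  have hx : x = swap (Fin.last n) (x (Fin.last n)) * emb (proj x) := by
    rw [emb_proj, ← mul_assoc, swap_mul_self, one_mul]
  conv_lhs => rw [hx]
  rw [hq.map_mul_emb, hq.map_swap_last hn, one_mul]

end IsBiequivariant

end Fin

/-- The canonical projection `p : S(n+1) → S(n)` is equivariant for the two-sided
action of `S(n)`: `p(g₂⁻¹ x g₁) = g₂⁻¹ p(x) g₁`; and for `n ≥ 4` it is the unique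
map `S(n+1) → S(n)` with this property. -/
theorem stmt7 (n : ℕ) :
    (∀ (g₁ g₂ : Equiv.Perm (Fin n)) (x : Equiv.Perm (Fin (n + 1))),
      proj (emb g₂⁻¹ * x * emb g₁) = g₂⁻¹ * proj x * g₁) ∧
    (4 ≤ n → ∀ q : Equiv.Perm (Fin (n + 1)) → Equiv.Perm (Fin n),
      (∀ (g₁ g₂ : Equiv.Perm (Fin n)) (x : Equiv.Perm (Fin (n + 1))),
        q (emb g₂⁻¹ * x * emb g₁) = g₂⁻¹ * q x * g₁) → q = proj) :=
  ⟨proj_isBiequivariant, fun hn _ hq => IsBiequivariant.eq_proj hq hn⟩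
end

section
/- Let k be a nonzero integer, say k > 0. Then for a partition λ, the product ∏_{b∈λ}(k + c(b)) is nonzero if and only if λ has at most k rows. Similarly, ∏_{b∈λ}(−k + c(b)) is nonzero if and only if λ has at most k columns. -/
/-!
A product `∏_{b ∈ λ} (a + c(b))` vanishes exactly when some cell has content `-a`. Contents are
constant along diagonals and decrease down the first column, so the cells of content `-k`
(with `k ≥ 0`) are the cells `(j + k, j)`, and one of them lies in `λ` iff `(k, 0)` does, i.e.
iff `λ` has more than `k` rows. Transposing negates contents and swaps rows with columns, which
gives the statement about columns.
-/

namespace YoungDiagram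

def content (b : ℕ × ℕ) : ℤ := b.2 - b.1

lemma content_swap (b : ℕ × ℕ) : content b.swap = -content b := by
  simp only [content, Prod.fst_swap, Prod.snd_swap, neg_sub]

lemma exists_content_eq_neg_iff (μ : YoungDiagram) (k : ℕ) :
    (∃ b ∈ μ, content b = -k) ↔ k < μ.colLen 0 := by
  rw [← mem_iff_lt_colLen]
  refine ⟨fun ⟨⟨i, j⟩, hb, hc⟩ => ?_, fun hk => ⟨(k, 0), hk, by simp [content]⟩⟩
  have hki : k ≤ i := by simp only [content] at hc; omega
  exact μ.up_left_mem hki (Nat.zero_le j) hb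

lemma exists_content_eq_iff (μ : YoungDiagram) (k : ℕ) :
    (∃ b ∈ μ, content b = k) ↔ k < μ.rowLen 0 := by
  rw [← colLen_transpose, ← exists_content_eq_neg_iff]
  constructor
  · rintro ⟨b, hb, hc⟩
    exact ⟨b.swap, mem_transpose.mpr (by rwa [Prod.swap_swap]), by rw [content_swap, hc]⟩
  · rintro ⟨b, hb, hc⟩
    exact ⟨b.swap, mem_transpose.mp hb, by rw [content_swap, hc, neg_neg]⟩

lemma prod_add_content_ne_zero_iff (μ : YoungDiagram) (a : ℤ) :
    ∏ b ∈ μ.cells, (a + content b) ≠ 0 ↔ ¬∃ b ∈ μ, content b = -a := by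
  simp only [Finset.prod_ne_zero_iff, mem_cells, not_exists, not_and]
  exact forall₂_congr fun b _ => by omega

end YoungDiagram

open YoungDiagram in
theorem stmt13_general (k : ℕ) (μ : YoungDiagram) :
    ((∏ b ∈ μ.cells, ((k : ℤ) + ((b.2 : ℤ) - (b.1 : ℤ))) ≠ 0) ↔ μ.colLen 0 ≤ k) ∧
    ((∏ b ∈ μ.cells, (-(k : ℤ) + ((b.2 : ℤ) - (b.1 : ℤ))) ≠ 0) ↔ μ.rowLen 0 ≤ k) := by
  constructor
  · rw [← not_lt, ← exists_content_eq_neg_iff]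
    exact prod_add_content_ne_zero_iff μ k
  · rw [← not_lt, ← exists_content_eq_iff]
    exact (prod_add_content_ne_zero_iff μ (-k)).trans (by rw [neg_neg])

/-- For a nonzero integer `k > 0`: `∏_{b∈λ}(k + c(b)) ≠ 0` iff `λ` has at most `k` rows,
and `∏_{b∈λ}(−k + c(b)) ≠ 0` iff `λ` has at most `k` columns. -/
theorem stmt13 (k : ℕ) (hk : 1 ≤ k) (μ : YoungDiagram) :
    ((∏ b ∈ μ.cells, ((k : ℤ) + ((b.2 : ℤ) - (b.1 : ℤ))) ≠ 0) ↔ μ.colLen 0 ≤ k) ∧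
    ((∏ b ∈ μ.cells, (-(k : ℤ) + ((b.2 : ℤ) - (b.1 : ℤ))) ≠ 0) ↔ μ.rowLen 0 ≤ k) :=
  stmt13_general k μ
end

section
/- Fix p ≥ 1, and for a partition λ with at most p rows set l_i = λ_i + p − i (1 ≤ i ≤ p), and let V(l_1,…,l_p) = ∏_{1≤i<j≤p}(l_i − l_j). Then ∑_{i=1}^p (l_i + 1)·V(l_1,…,l_i+1,…,l_p) = (l_1+⋯+l_p + p(p+1)/2)·V(l_1,…,l_p) for any strictly decreasing sequence l_1 > l_2 > ⋯ > l_p ≥ 0 (in fact for all real l_1,…,l_p). -/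
/-!
Both products are the same sign times Vandermonde determinants. Multiplying row `i` of
`vandermonde (update l i (l i + 1))` by `l i + 1` gives `l i` times row `i` of `A = vandermonde l`
plus the values at `l i` of the polynomials `(X + 1) ^ (j + 1) - X ^ (j + 1)`, i.e. row `i` of
`A * B` with `B` upper triangular with diagonal `1, 2, …, p`. By multilinearity the left side is
`(∑ l i) det A + ∑ i, det (A with row i replaced by row i of A * B) = (∑ l i + trace B) det A`,
and `trace B = p (p + 1) / 2`.
-/

open Finset Matrix

namespace Polynomial

variable {R : Type*} [CommRing R]

theorem natDegree_X_add_one_pow_succ_sub_X_pow_succ_le (j : ℕ) :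
    ((X + 1) ^ (j + 1) - X ^ (j + 1) : R[X]).natDegree ≤ j := by
  refine natDegree_le_iff_coeff_eq_zero.2 fun k hk => ?_
  rw [coeff_sub, coeff_X_add_one_pow, coeff_X_pow]
  rcases (Nat.succ_le_of_lt hk).eq_or_lt with rfl | hlt
  · simp
  · simp [Nat.choose_eq_zero_of_lt hlt, hlt.ne']

end Polynomial

namespace Matrix

open Polynomial

variable {R : Type*} [CommRing R]

theorem sum_det_updateRow_mul_apply {n : Type*} [Fintype n] [DecidableEq n]
    (A B : Matrix n n R) :
    ∑ i, det (updateRow A i ((A * B) i)) = det A * trace B := by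
  have det_updateRow_eq (i : n) (b : n → R) :
      det (updateRow A i b) = ∑ j, adjugate A j i * b j := by
    rw [← cramer_transpose_apply, cramer_eq_adjugate_mulVec, ← adjugate_transpose]
    simp [mulVec, dotProduct, mul_comm]
  calc ∑ i, det (updateRow A i ((A * B) i))
      = trace (A * B * adjugate A) := by
        simp only [trace, det_updateRow_eq, diag_apply, mul_apply]
        exact sum_congr rfl fun i _ => sum_congr rfl fun j _ => mul_comm _ _
    _ = trace (B * (adjugate A * A)) := by
        rw [Matrix.mul_assoc, trace_mul_comm, Matrix.mul_assoc]
    _ = det A * trace B := by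
        rw [adjugate_mul, Matrix.mul_smul, Matrix.mul_one, trace_smul, smul_eq_mul]

theorem vandermonde_update {n : ℕ} (v : Fin n → R) (i : Fin n) (x : R) :
    vandermonde (Function.update v i x) = updateRow (vandermonde v) i fun j => x ^ (j : ℕ) := by
  ext a j
  rcases eq_or_ne a i with rfl | h
  · simp [vandermonde_apply]
  · simp [vandermonde_apply, h]

theorem prod_Ioi_sub_eq_neg_one_pow_mul_det_vandermonde {n : ℕ} (v : Fin n → R) :
    ∏ a, ∏ b ∈ Ioi a, (v a - v b) = (-1) ^ (∑ a : Fin n, #(Ioi a)) * det (vandermonde v) := by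
  rw [det_vandermonde, ← prod_pow_eq_pow_sum, ← prod_mul_distrib]
  refine prod_congr rfl fun a _ => ?_
  rw [← prod_const, ← prod_mul_distrib]
  exact prod_congr rfl fun b _ => by ring

theorem sum_mul_det_vandermonde_update_add_one {n : ℕ} (v : Fin n → R) :
    ∑ i, (v i + 1) * det (vandermonde (Function.update v i (v i + 1)))
      = (∑ i, v i + ∑ j : Fin n, ((j : R) + 1)) * det (vandermonde v) := by
  set q : Fin n → R[X] := fun j => (X + 1) ^ ((j : ℕ) + 1) - X ^ ((j : ℕ) + 1)
  set B : Matrix (Fin n) (Fin n) R := of fun k j => (q j).coeff k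
  have hAB : vandermonde v * B = of fun i j => (q j).eval (v i) :=
    (eval_matrixOfPolynomials_eq_vandermonde_mul_matrixOfPolynomials v q
      fun j => natDegree_X_add_one_pow_succ_sub_X_pow_succ_le j).symm
  have hrow (i : Fin n) : (v i + 1) • (fun j : Fin n => (v i + 1) ^ (j : ℕ))
      = v i • vandermonde v i + (vandermonde v * B) i := by
    ext j
    simp only [Pi.smul_apply, smul_eq_mul, hAB, eval_sub, eval_pow, eval_add, eval_X, eval_one,
      Pi.add_apply, vandermonde_apply, of_apply, q]
    ring
  have hterm (i : Fin n) : (v i + 1) * det (vandermonde (Function.update v i (v i + 1)))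
      = v i * det (vandermonde v) + det (updateRow (vandermonde v) i ((vandermonde v * B) i)) := by
    rw [vandermonde_update, ← det_updateRow_smul, hrow, det_updateRow_add, det_updateRow_smul,
      updateRow_eq_self]
  have htrace : trace B = ∑ j : Fin n, ((j : R) + 1) := by
    refine sum_congr rfl fun j _ => ?_
    simp [B, q, coeff_X_add_one_pow, Nat.choose_succ_self_right]
  rw [sum_congr rfl fun i _ => hterm i, sum_add_distrib, ← sum_mul, sum_det_updateRow_mul_apply,
    htrace]
  ring

end Matrix

theorem Fin.sum_natCast_add_one {K : Type*} [Field K] [CharZero K] (n : ℕ) :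
    ∑ j : Fin n, ((j : K) + 1) = n * (n + 1) / 2 := by
  induction n with
  | zero => simp
  | succ n ih =>
    rw [Fin.sum_univ_castSucc]
    simp only [Fin.val_castSucc, ih, Fin.val_last]
    push_cast
    ring

theorem stmt15_general (p : ℕ) (l : Fin p → ℝ) :
    ∑ i : Fin p, (l i + 1) *
        ∏ a : Fin p, ∏ b ∈ Finset.Ioi a,
          (Function.update l i (l i + 1) a - Function.update l i (l i + 1) b)
      = ((∑ i : Fin p, l i) + p * (p + 1) / 2) *
          ∏ a : Fin p, ∏ b ∈ Finset.Ioi a, (l a - l b) := by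
  simp only [prod_Ioi_sub_eq_neg_one_pow_mul_det_vandermonde, mul_left_comm _ ((-1 : ℝ) ^ _),
    ← mul_sum, sum_mul_det_vandermonde_update_add_one, Fin.sum_natCast_add_one]

/-- Vandermonde identity behind pseudoharmonicity of `g_p`:
`∑_{i=1}^p (l_i + 1)·V(l_1,…,l_i+1,…,l_p) = (l_1+⋯+l_p + p(p+1)/2)·V(l_1,…,l_p)`
for all real `l_1,…,l_p`, where `V` is the Vandermonde product. -/
theorem stmt15 (p : ℕ) (hp : 1 ≤ p) (l : Fin p → ℝ) :
    ∑ i : Fin p, (l i + 1) *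
        ∏ a : Fin p, ∏ b ∈ Finset.Ioi a,
          (Function.update l i (l i + 1) a - Function.update l i (l i + 1) b)
      = ((∑ i : Fin p, l i) + p * (p + 1) / 2) *
          ∏ a : Fin p, ∏ b ∈ Finset.Ioi a, (l a - l b) :=
  stmt15_general p l
end

section
/- Let p ≥ 1. The function 1/((α_1+β_1)(α_2+β_2)⋯(α_p+β_p)) is integrable with respect to Lebesgue measure on the standard (p+q−1)-dimensional simplex {α_i ≥ 0, β_j ≥ 0, ∑_{i=1}^p α_i + ∑_{j=1}^q β_j = 1} (q ≥ p). In fact, the pushforward of the measure with this density under the map (α;β) ↦ (α_1+β_1,…,α_p+β_p, β_{p+1},…,β_q) is Lebesgue measure on the image simplex. -/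
/-!
The shear `(α, β) ↦ (α, s)` with `s_j = α_j + β_j` for `j ≤ p` and `s_j = β_j` otherwise preserves
Lebesgue measure. In the new coordinates the simplex is the set of `(α, s)` with `s` in the image
simplex and `α` in the box `∏ i, [0, t_i(s)]`, where `t_i(s) = α_i + β_i` is a barycentric
coordinate of `s`, and the density is `1 / ∏ i, t_i(s)`. By Fubini, integrating out `α` produces
the box volume `∏ i, t_i(s)`, which cancels the density off the null set where some `t_i(s)`
vanishes; so the pushforward is Lebesgue measure on the image simplex. In particular the density
has total mass equal to the (finite) volume of that simplex, hence is integrable.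
-/

open MeasureTheory

/-- The standard `(m)`-coordinate simplex `{v ∈ ℝ^m : v_i ≥ 0, ∑ v_i ≤ 1}`, serving as a
coordinate chart (dropping the last barycentric coordinate) for the standard
`m`-dimensional simplex with its Lebesgue measure. -/
def simplexD (m : ℕ) : Set (Fin m → ℝ) :=
  {v | (∀ i, 0 ≤ v i) ∧ ∑ i, v i ≤ 1}

/-- The coordinates `β_1,…,β_q` of a point of the `(p+q−1)`-simplex
`{α_i ≥ 0, β_j ≥ 0, ∑α + ∑β = 1}` in the chart where `v = (α_1,…,α_p,β_1,…,β_{q−1})`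
and `β_q = 1 − ∑ v`. -/
noncomputable def betaOf (p q : ℕ) (v : Fin (p + q - 1) → ℝ) (j : Fin q) : ℝ :=
  if h : (j : ℕ) < q - 1 then v ⟨p + j, by omega⟩ else 1 - ∑ i, v i

/-- The density `1/((α_1+β_1)⋯(α_p+β_p))`. -/
noncomputable def densityF (p q : ℕ) (hp : 1 ≤ p) (hpq : p ≤ q) (v : Fin (p + q - 1) → ℝ) : ℝ :=
  1 / ∏ i : Fin p,
      (v ⟨i, by have := i.isLt; omega⟩ + betaOf p q v ⟨i, by have := i.isLt; omega⟩)

/-- The map `(α;β) ↦ (α_1+β_1,…,α_p+β_p, β_{p+1},…,β_q)`, in coordinate charts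
(the last coordinate of the image, being determined, is dropped). -/
noncomputable def projMap (p q : ℕ) (hp : 1 ≤ p) (hpq : p ≤ q) (v : Fin (p + q - 1) → ℝ)
    (j : Fin (q - 1)) : ℝ :=
  if hj : (j : ℕ) < p then
    v ⟨j, by have := j.isLt; omega⟩ + v ⟨p + j, by have := j.isLt; omega⟩
  else v ⟨p + j, by have := j.isLt; omega⟩

namespace MeasureTheory

theorem MeasurePreserving.map_withDensity_comp {X Y : Type*} [MeasurableSpace X]
    [MeasurableSpace Y] {μ : Measure X} {ν : Measure Y} {f : X → Y}
    (hf : MeasurePreserving f μ ν) {g : Y → ENNReal} (hg : Measurable g) :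
    (μ.withDensity (g ∘ f)).map f = ν.withDensity g := by
  ext s hs
  rw [Measure.map_apply hf.measurable hs, withDensity_apply _ (hf.measurable hs),
    withDensity_apply _ hs, ← hf.setLIntegral_comp_preimage hs hg]
  rfl

theorem measurePreserving_prod_add_comp {X Y : Type*} [MeasurableSpace X] [MeasurableSpace Y]
    [AddGroup Y] [MeasurableAdd₂ Y] (μ : Measure X) (ν : Measure Y) [SFinite μ] [SFinite ν]
    [ν.IsAddRightInvariant] {c : X → Y} (hc : Measurable c) :
    MeasurePreserving (fun w : X × Y => (w.1, w.2 + c w.1)) (μ.prod ν) (μ.prod ν) :=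
  (MeasurePreserving.id μ).skew_product (measurable_snd.add (hc.comp measurable_fst))
    (.of_forall fun x => map_add_right_eq_self ν (c x))

theorem volume_measurePreserving_piSplit {ι κ ι' : Type*} [Fintype ι] [Fintype κ] [Fintype ι']
    (σ : ι ⊕ κ ≃ ι') :
    MeasurePreserving (fun v : ι' → ℝ => (fun i => v (σ (.inl i)), fun j => v (σ (.inr j))))
      volume (volume.prod volume) :=
  (volume_measurePreserving_sumPiEquivProdPi fun _ => ℝ).comp
    (volume_measurePreserving_piCongrLeft (fun _ => ℝ) σ).symm

theorem Measure.addHaar_preimage_linearMap_singleton {E : Type*} [NormedAddCommGroup E]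
    [NormedSpace ℝ E] [MeasurableSpace E] [BorelSpace E] [FiniteDimensional ℝ E] (μ : Measure E)
    [μ.IsAddHaarMeasure] (L : E →ₗ[ℝ] ℝ) {c : ℝ} (h : ∃ x, L x ≠ c) : μ (L ⁻¹' {c}) = 0 := by
  have hA := Measure.addHaar_affineSubspace μ ((affineSpan ℝ {c}).comap L.toAffineMap) ?_
  · simpa [AffineSubspace.coe_comap, AffineSubspace.coe_affineSpan_singleton] using hA
  · obtain ⟨x, hx⟩ := h
    intro htop
    have : x ∈ (affineSpan ℝ {c}).comap L.toAffineMap := htop ▸ AffineSubspace.mem_top ℝ E x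
    simp [AffineSubspace.mem_comap] at this
    exact hx this

end MeasureTheory

theorem ENNReal.ofReal_one_div_prod_mul_prod_ofReal {ι : Type*} [Fintype ι] {t : ι → ℝ}
    (ht : ∀ i, 0 < t i) :
    ENNReal.ofReal (1 / ∏ i, t i) * ∏ i, ENNReal.ofReal (t i) = 1 := by
  have hprod : 0 < ∏ i, t i := Finset.prod_pos fun i _ => ht i
  rw [← ENNReal.ofReal_prod_of_nonneg fun i _ => (ht i).le, ← ENNReal.ofReal_mul (by positivity),
    one_div_mul_cancel hprod.ne', ENNReal.ofReal_one]

section FiberBoxes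

variable {ι Y : Type*}

def fiberBoxes (S : Set Y) (t : Y → ι → ℝ) : Set ((ι → ℝ) × Y) :=
  {w | w.2 ∈ S ∧ w.1 ∈ Set.univ.pi fun i => Set.Icc 0 (t w.2 i)}

theorem measurableSet_fiberBoxes [Fintype ι] [MeasurableSpace Y] {S : Set Y}
    (hS : MeasurableSet S) {t : Y → ι → ℝ} (ht : Measurable t) :
    MeasurableSet (fiberBoxes S t) := by
  simp only [fiberBoxes, Set.mem_univ_pi, Set.mem_Icc]
  measurability

theorem fiberBoxes_inter_preimage_snd (S A : Set Y) (t : Y → ι → ℝ) :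
    fiberBoxes S t ∩ Prod.snd ⁻¹' A = fiberBoxes (S ∩ A) t := by
  ext w
  simp only [fiberBoxes, Set.mem_inter_iff, Set.mem_ofPred_eq, Set.mem_preimage]
  tauto

theorem lintegral_fiberBoxes [Fintype ι] [MeasurableSpace Y] (ν : Measure Y) [SFinite ν]
    {S : Set Y} (hS : MeasurableSet S) {t : Y → ι → ℝ} (ht : Measurable t) {g : Y → ENNReal}
    (hg : Measurable g) :
    ∫⁻ w in fiberBoxes S t, g w.2 ∂((volume : Measure (ι → ℝ)).prod ν)
      = ∫⁻ y in S, g y * ∏ i, ENNReal.ofReal (t y i) ∂ν := by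
  have hR := measurableSet_fiberBoxes hS ht
  rw [← lintegral_indicator hR,
    lintegral_prod_symm (f := (fiberBoxes S t).indicator fun w => g w.2)
      ((hg.comp measurable_snd).indicator hR).aemeasurable,
    ← lintegral_indicator hS]
  refine lintegral_congr fun y => ?_
  by_cases hy : y ∈ S
  · have hbox (α : ι → ℝ) : (fiberBoxes S t).indicator (fun w => g w.2) (α, y)
        = (Set.univ.pi fun i => Set.Icc 0 (t y i)).indicator (fun _ => g y) α := by
      by_cases hα : α ∈ Set.univ.pi fun i => Set.Icc 0 (t y i)
      · rw [Set.indicator_of_mem (show (α, y) ∈ fiberBoxes S t from ⟨hy, hα⟩),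
          Set.indicator_of_mem hα]
      · rw [Set.indicator_of_notMem (fun h => hα h.2), Set.indicator_of_notMem hα]
    simp_rw [hbox, Set.indicator_of_mem hy]
    rw [lintegral_indicator_const (MeasurableSet.univ_pi fun i => measurableSet_Icc),
      volume_pi_pi]
    simp_rw [Real.volume_Icc, sub_zero]
  · rw [Set.indicator_of_notMem hy]
    exact lintegral_eq_zero_of_ae_eq_zero
      (.of_forall fun α => Set.indicator_of_notMem (fun h => hy h.1) _)

/-- A box of side lengths `t y` carries total mass one under the density `1 / ∏ i, t y i`. -/
theorem map_snd_withDensity_restrict_fiberBoxes [Fintype ι] [MeasurableSpace Y] (ν : Measure Y)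
    [SFinite ν] {S : Set Y} (hS : MeasurableSet S) {t : Y → ι → ℝ} (ht : Measurable t)
    (hpos : ∀ᵐ y ∂(ν.restrict S), ∀ i, 0 < t y i) :
    ((((volume : Measure (ι → ℝ)).prod ν).restrict (fiberBoxes S t)).withDensity
      fun w => ENNReal.ofReal (1 / ∏ i, t w.2 i)).map Prod.snd = ν.restrict S := by
  ext A hA
  rw [Measure.map_apply measurable_snd hA, withDensity_apply _ (measurable_snd hA),
    Measure.restrict_restrict (measurable_snd hA), Set.inter_comm, fiberBoxes_inter_preimage_snd,
    lintegral_fiberBoxes ν (hS.inter hA) ht (g := fun y => ENNReal.ofReal (1 / ∏ i, t y i))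
      (by fun_prop), Measure.restrict_apply hA, Set.inter_comm, ← setLIntegral_one]
  refine lintegral_congr_ae ?_
  filter_upwards [ae_restrict_of_ae_restrict_of_subset Set.inter_subset_right hpos]
    with y hy using ENNReal.ofReal_one_div_prod_mul_prod_ofReal hy

end FiberBoxes

namespace ThomaSimplex

variable {p q : ℕ}

def appendLast (s : Fin (q - 1) → ℝ) (x : ℝ) (j : Fin q) : ℝ :=
  if h : (j : ℕ) < q - 1 then s ⟨j, h⟩ else x

theorem forall_appendLast (hq : 1 ≤ q) {P : ℝ → Prop} {s : Fin (q - 1) → ℝ} {x : ℝ} :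
    (∀ j, P (appendLast s x j)) ↔ (∀ j, P (s j)) ∧ P x := by
  refine ⟨fun h => ⟨fun j => ?_, ?_⟩, fun h j => ?_⟩
  · simpa [appendLast, j.isLt] using h ⟨j, by omega⟩
  · simpa [appendLast] using h ⟨q - 1, by omega⟩
  · unfold appendLast
    split_ifs
    exacts [h.1 _, h.2]

/-- All `q` barycentric coordinates of the point of the standard `(q-1)`-simplex with chart
coordinates `s`; for `s = projMap v` this restores the coordinate that `projMap` drops. -/
def baryCoord (s : Fin (q - 1) → ℝ) : Fin q → ℝ :=
  appendLast s (1 - ∑ j, s j)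

theorem mem_simplexD_iff_baryCoord_nonneg (hq : 1 ≤ q) (s : Fin (q - 1) → ℝ) :
    s ∈ simplexD (q - 1) ↔ ∀ j, 0 ≤ baryCoord s j := by
  rw [baryCoord, forall_appendLast hq, sub_nonneg]
  rfl

@[fun_prop]
theorem measurable_baryCoord : Measurable (baryCoord (q := q)) := by
  refine measurable_pi_lambda _ fun j => ?_
  unfold baryCoord appendLast
  by_cases h : (j : ℕ) < q - 1
  · simp only [h, dif_pos]; fun_prop
  · simp only [h, dif_neg, not_false_eq_true]; fun_prop

theorem measurableSet_simplexD (m : ℕ) : MeasurableSet (simplexD m) := by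
  simp only [simplexD, Set.ofPred_and, Set.ofPred_forall]
  exact (MeasurableSet.iInter fun i =>
      measurableSet_le measurable_const (measurable_pi_apply i)).inter
    (measurableSet_le (Finset.measurable_sum _ fun i _ => measurable_pi_apply i) measurable_const)

theorem volume_simplexD_lt_top (m : ℕ) : volume (simplexD m) < ⊤ := by
  refine (measure_mono fun v hv => ?_).trans_lt
    (isCompact_Icc (a := (0 : Fin m → ℝ)) (b := 1)).measure_lt_top
  exact ⟨hv.1, fun i => (Finset.single_le_sum (fun j _ => hv.1 j) (Finset.mem_univ i)).trans hv.2⟩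

theorem ae_baryCoord_pos (hq : 1 ≤ q) :
    ∀ᵐ s ∂(volume.restrict (simplexD (q - 1))), ∀ j, 0 < baryCoord s j := by
  have hne : ∀ᵐ s : Fin (q - 1) → ℝ, ∀ j, baryCoord s j ≠ 0 := by
    refine ae_all_iff.2 fun j => ae_iff.2 ?_
    simp only [ne_eq, not_not, baryCoord, appendLast]
    split_ifs with hj
    · exact Measure.addHaar_preimage_linearMap_singleton volume
        (LinearMap.proj ⟨j, hj⟩ : (Fin (q - 1) → ℝ) →ₗ[ℝ] ℝ) (c := 0) ⟨fun _ => 1, by simp⟩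
    · have := Measure.addHaar_preimage_linearMap_singleton volume
        (∑ i, LinearMap.proj i : (Fin (q - 1) → ℝ) →ₗ[ℝ] ℝ) (c := 1) ⟨0, by simp⟩
      convert this using 2
      ext s
      simp only [Set.mem_ofPred_eq, Set.mem_preimage, LinearMap.sum_apply, LinearMap.proj_apply,
        Set.mem_singleton_iff]
      constructor <;> intro h <;> linarith
  filter_upwards [ae_restrict_mem (measurableSet_simplexD _), ae_restrict_of_ae hne]
    with s hs hs0 j
  exact ((mem_simplexD_iff_baryCoord_nonneg hq s).1 hs j).lt_of_ne' (hs0 j)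

def padZero (α : Fin p → ℝ) (k : ℕ) : ℝ :=
  if h : k < p then α ⟨k, h⟩ else 0

theorem sum_range_padZero {m : ℕ} (α : Fin p → ℝ) (h : p ≤ m) :
    ∑ k ∈ Finset.range m, padZero α k = ∑ i, α i := by
  have hα : ∑ i, α i = ∑ k ∈ Finset.range p, padZero α k := by
    rw [← Fin.sum_univ_eq_sum_range]
    simp [padZero]
  rw [hα, ← Nat.add_sub_cancel' h, Finset.sum_range_add, add_eq_left]
  exact Finset.sum_eq_zero fun k _ => dif_neg (by omega)

theorem measurable_padZero (k : ℕ) : Measurable fun α : Fin p → ℝ => padZero α k := by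
  unfold padZero
  by_cases h : k < p
  · simp only [h, dif_pos]; fun_prop
  · simp only [h, dif_neg, not_false_eq_true]; fun_prop

def splitEquiv (hq : 1 ≤ q) : Fin p ⊕ Fin (q - 1) ≃ Fin (p + q - 1) :=
  finSumFinEquiv.trans (finCongr (by omega))

def alphaOf (hq : 1 ≤ q) (v : Fin (p + q - 1) → ℝ) (i : Fin p) : ℝ :=
  v (splitEquiv hq (.inl i))

def betaHead (hq : 1 ≤ q) (v : Fin (p + q - 1) → ℝ) (j : Fin (q - 1)) : ℝ :=
  v (splitEquiv hq (.inr j))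

theorem betaOf_eq_appendLast (hq : 1 ≤ q) (v : Fin (p + q - 1) → ℝ) :
    betaOf p q v = appendLast (betaHead hq v) (1 - ∑ k, v k) := rfl

theorem sum_eq_sum_alphaOf_add_sum_betaHead (hq : 1 ≤ q) (v : Fin (p + q - 1) → ℝ) :
    ∑ k, v k = ∑ i, alphaOf hq v i + ∑ j, betaHead hq v j := by
  rw [← (splitEquiv hq).sum_comp, Fintype.sum_sum_type]
  rfl

theorem projMap_apply (hp : 1 ≤ p) (hpq : p ≤ q) (v : Fin (p + q - 1) → ℝ) (j : Fin (q - 1)) :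
    projMap p q hp hpq v j =
      betaHead (hp.trans hpq) v j + padZero (alphaOf (hp.trans hpq) v) j := by
  unfold projMap padZero
  split_ifs
  · exact add_comm _ _
  · exact (add_zero _).symm

theorem mem_simplexD_iff_alphaOf_betaOf (hq : 1 ≤ q) (v : Fin (p + q - 1) → ℝ) :
    v ∈ simplexD (p + q - 1) ↔ (∀ i, 0 ≤ alphaOf hq v i) ∧ ∀ j, 0 ≤ betaOf p q v j := by
  rw [betaOf_eq_appendLast hq, forall_appendLast hq, sub_nonneg, simplexD, Set.mem_ofPred_eq,
    ← (splitEquiv hq).forall_congr_right, Sum.forall, and_assoc]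
  rfl

theorem betaOf_add_padZero (hp : 1 ≤ p) (hpq : p ≤ q) (v : Fin (p + q - 1) → ℝ) (j : Fin q) :
    betaOf p q v j + padZero (alphaOf (hp.trans hpq) v) j =
      baryCoord (projMap p q hp hpq v) j := by
  have hq := hp.trans hpq
  simp only [betaOf_eq_appendLast hq, baryCoord, appendLast, projMap_apply]
  split_ifs with hj
  · rfl
  · have hj : (j : ℕ) = q - 1 := by omega
    have hsum : ∑ k ∈ Finset.range (q - 1 + 1), padZero (alphaOf hq v) k = ∑ i, alphaOf hq v i :=
      sum_range_padZero _ (by omega)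
    rw [Finset.sum_range_succ] at hsum
    rw [Finset.sum_add_distrib, sum_eq_sum_alphaOf_add_sum_betaHead hq, ← hsum, hj,
      ← Fin.sum_univ_eq_sum_range (fun k => padZero (alphaOf hq v) k)]
    ring

theorem densityF_eq (hp : 1 ≤ p) (hpq : p ≤ q) (v : Fin (p + q - 1) → ℝ) :
    densityF p q hp hpq v = 1 / ∏ i, baryCoord (projMap p q hp hpq v) (Fin.castLE hpq i) := by
  unfold densityF
  congr 1
  refine Finset.prod_congr rfl fun i _ => ?_
  rw [← betaOf_add_padZero hp hpq, add_comm]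
  simp only [padZero, Fin.val_castLE, i.isLt, dif_pos]
  rfl

theorem mem_simplexD_iff_projMap (hp : 1 ≤ p) (hpq : p ≤ q) (v : Fin (p + q - 1) → ℝ) :
    v ∈ simplexD (p + q - 1) ↔ projMap p q hp hpq v ∈ simplexD (q - 1) ∧
      alphaOf (hp.trans hpq) v ∈ Set.univ.pi fun i =>
        Set.Icc 0 (baryCoord (projMap p q hp hpq v) (Fin.castLE hpq i)) := by
  have hq := hp.trans hpq
  have hβ (j : Fin q) : betaOf p q v j =
      baryCoord (projMap p q hp hpq v) j - padZero (alphaOf hq v) j := by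
    rw [← betaOf_add_padZero hp hpq, add_sub_cancel_right]
  have hpad (i : Fin p) : padZero (alphaOf hq v) (Fin.castLE hpq i) = alphaOf hq v i := by
    simp [padZero]
  simp only [mem_simplexD_iff_alphaOf_betaOf hq, mem_simplexD_iff_baryCoord_nonneg hq, hβ,
    sub_nonneg, Set.mem_univ_pi, Set.mem_Icc]
  constructor
  · rintro ⟨hα, hle⟩
    refine ⟨fun j => (?_ : 0 ≤ padZero _ _).trans (hle j), fun i => ⟨hα i, ?_⟩⟩
    · unfold padZero; split_ifs; exacts [hα _, le_rfl]
    · simpa only [hpad] using hle (Fin.castLE hpq i)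
  · rintro ⟨hnn, hbox⟩
    refine ⟨fun i => (hbox i).1, fun j => ?_⟩
    unfold padZero
    split_ifs with hj
    · exact (hbox ⟨j, hj⟩).2
    · exact hnn j

noncomputable def chart (hp : 1 ≤ p) (hpq : p ≤ q) (v : Fin (p + q - 1) → ℝ) :
    (Fin p → ℝ) × (Fin (q - 1) → ℝ) :=
  (alphaOf (hp.trans hpq) v, projMap p q hp hpq v)

/-- `chart` is the split `v ↦ (α, (β_1,…,β_{q-1}))` followed by the shear `β_j ↦ β_j + α_j`. -/
theorem measurePreserving_chart (hp : 1 ≤ p) (hpq : p ≤ q) :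
    MeasurePreserving (chart hp hpq) volume (volume.prod volume) := by
  have hshear := measurePreserving_prod_add_comp (volume : Measure (Fin p → ℝ))
    (volume : Measure (Fin (q - 1) → ℝ)) (c := fun α j => padZero α j)
    (measurable_pi_lambda _ fun j => measurable_padZero j)
  convert hshear.comp (volume_measurePreserving_piSplit (splitEquiv (hp.trans hpq)))
  ext v j
  · rfl
  · exact projMap_apply hp hpq v j

theorem map_projMap_withDensity_densityF (hp : 1 ≤ p) (hpq : p ≤ q) :
    Measure.map (projMap p q hp hpq)
        ((volume.restrict (simplexD (p + q - 1))).withDensity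
          fun v => ENNReal.ofReal (densityF p q hp hpq v))
      = volume.restrict (simplexD (q - 1)) := by
  set t : (Fin (q - 1) → ℝ) → Fin p → ℝ := fun s i => baryCoord s (Fin.castLE hpq i)
  have ht : Measurable t :=
    measurable_pi_lambda _ fun i => (measurable_pi_apply _).comp measurable_baryCoord
  have hchart := measurePreserving_chart hp hpq
  have hregion : simplexD (p + q - 1) = chart hp hpq ⁻¹' fiberBoxes (simplexD (q - 1)) t :=
    Set.ext (mem_simplexD_iff_projMap hp hpq)
  have hdensity : (fun v => ENNReal.ofReal (densityF p q hp hpq v))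
      = (fun w => ENNReal.ofReal (1 / ∏ i, t w.2 i)) ∘ chart hp hpq :=
    funext fun v => congrArg ENNReal.ofReal (densityF_eq hp hpq v)
  rw [show projMap p q hp hpq = Prod.snd ∘ chart hp hpq from rfl,
    ← Measure.map_map measurable_snd hchart.measurable, hregion, hdensity,
    (hchart.restrict_preimage (measurableSet_fiberBoxes (measurableSet_simplexD _) ht)
      ).map_withDensity_comp (by fun_prop)]
  refine map_snd_withDensity_restrict_fiberBoxes volume (measurableSet_simplexD _) ht ?_
  filter_upwards [ae_baryCoord_pos (hp.trans hpq)] with s hs i using hs _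

end ThomaSimplex

open ThomaSimplex in
/-- The function `1/((α_1+β_1)⋯(α_p+β_p))` is integrable with respect to Lebesgue measure
on the standard `(p+q−1)`-dimensional simplex `{α_i ≥ 0, β_j ≥ 0, ∑α + ∑β = 1}` (`q ≥ p`);
in fact the pushforward of the measure with this density under
`(α;β) ↦ (α_1+β_1,…,α_p+β_p, β_{p+1},…,β_q)` is Lebesgue measure on the image simplex. -/
theorem stmt17 (p q : ℕ) (hp : 1 ≤ p) (hpq : p ≤ q) :
    IntegrableOn (densityF p q hp hpq) (simplexD (p + q - 1)) volume ∧
    Measure.map (projMap p q hp hpq)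
        ((volume.restrict (simplexD (p + q - 1))).withDensity
          fun v => ENNReal.ofReal (densityF p q hp hpq v))
      = volume.restrict (simplexD (q - 1)) := by
  have hmap := map_projMap_withDensity_densityF hp hpq
  refine ⟨?_, hmap⟩
  have hproj : Measurable (projMap p q hp hpq) :=
    measurable_snd.comp (measurePreserving_chart hp hpq).measurable
  have hmeas : Measurable (densityF p q hp hpq) := by
    rw [funext (densityF_eq hp hpq)]
    fun_prop
  have hnonneg : 0 ≤ᵐ[volume.restrict (simplexD (p + q - 1))] densityF p q hp hpq := by
    filter_upwards [ae_restrict_mem (measurableSet_simplexD _)] with v hv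
    have hbary := (mem_simplexD_iff_baryCoord_nonneg (hp.trans hpq) _).1
      ((mem_simplexD_iff_projMap hp hpq v).1 hv).1
    rw [Pi.zero_apply, densityF_eq]
    exact one_div_nonneg.2 (Finset.prod_nonneg fun i _ => hbary _)
  rw [IntegrableOn, ← lintegral_ofReal_ne_top_iff_integrable hmeas.aestronglyMeasurable hnonneg]
  calc _ = Measure.map (projMap p q hp hpq)
        ((volume.restrict (simplexD (p + q - 1))).withDensity
          fun v => ENNReal.ofReal (densityF p q hp hpq v)) Set.univ := by
        rw [Measure.map_apply hproj MeasurableSet.univ, Set.preimage_univ,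
          withDensity_apply _ MeasurableSet.univ, Measure.restrict_univ]
    _ ≠ ⊤ := by
        rw [hmap, Measure.restrict_apply_univ]
        exact (volume_simplexD_lt_top _).ne
end
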